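/- arXiv:2407.07344 — 2 statements merged into one kernel-verified Lean document; each statement's English description precedes it below -/
import Mathlib

section
/- Let R be a commutative ring and M a finite free R-module of rank r ≥ 1. Then the wedge-product pairing ⋀^{r−1} M ⊗ M → ⋀^r M induces an isomorphism of R-modules ⋀^{r−1} M ≅ ⋀^r M ⊗ M^*, where M^* = Hom_R(M, R). -/
open TensorProduct

/-- Contraction against `m : M`: sends `t ⊗ φ ∈ ⋀^r M ⊗ M^*` to `φ(m) • t`,
viewed in the exterior algebra. -/
noncomputable def contractAt (R : Type*) [CommRing R] (M : Type*) [AddCommGroup M]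
    [Module R M] (r : ℕ) (m : M) :
    ((⋀[R]^r M) ⊗[R] Module.Dual R M) →ₗ[R] ExteriorAlgebra R M :=
  TensorProduct.lift
    { toFun := fun t =>
        { toFun := fun φ => φ m • (t : ExteriorAlgebra R M)
          map_add' := by intro φ ψ; simp [add_smul]
          map_smul' := by intro c φ; simp [mul_smul] }
      map_add' := by intro t₁ t₂; ext φ; simp [smul_add]
      map_smul' := by
        intro c t
        ext φ
        simp only [LinearMap.coe_mk, AddHom.coe_mk, RingHom.id_apply,
          LinearMap.smul_apply, Submodule.coe_smul]
        exact smul_comm _ _ _ }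

/-!
Choose a basis `b₁, …, b_r` of `M` with dual basis `b₁^*, …, b_r^*`. Via
`Hom(M, ⋀^r M) ≅ ⋀^r M ⊗ M^*` the claimed isomorphism is right wedging `x ↦ (m ↦ x ∧ m)`, and
its inverse is `f ↦ ∑ᵢ f(bᵢ) ⌊ bᵢ^*`, where `⌊` is right contraction, an antiderivation of
degree `-1`. One composite is the identity by the Euler identity `∑ᵢ (x ⌊ bᵢ^*) ∧ bᵢ = k x` on
`⋀^k M`, which gives `∑ᵢ (x ∧ bᵢ) ⌊ bᵢ^* = (r - k) x`; the other because `⋀^{r+1} M = 0`, so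
that `0 = (t ∧ m) ⌊ φ = φ(m) t - (t ⌊ φ) ∧ m` for `t` of top degree.
-/

namespace ExteriorAlgebra

open CliffordAlgebra (contractRight contractRight_mul_ι contractRight_ι contractRight_algebraMap)

variable {R : Type*} [CommRing R] {M : Type*} [AddCommGroup M] [Module R M]

theorem mul_ι_mem_exteriorPower {k : ℕ} {x : ExteriorAlgebra R M} (hx : x ∈ ⋀[R]^k M)
    (m : M) : x * ι R m ∈ ⋀[R]^(k + 1) M := by
  rw [exteriorPower, pow_succ]
  exact Submodule.mul_mem_mul hx (LinearMap.mem_range_self _ m)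

theorem contractRight_mem_exteriorPower (φ : Module.Dual R M) {k : ℕ} {x : ExteriorAlgebra R M}
    (hx : x ∈ ⋀[R]^(k + 1) M) : contractRight x φ ∈ ⋀[R]^k M := by
  induction k generalizing x with
  | zero =>
    rw [exteriorPower, zero_add, pow_one] at hx
    obtain ⟨n, rfl⟩ := hx
    rw [contractRight_ι, exteriorPower, pow_zero]
    exact Submodule.algebraMap_mem _
  | succ k ih =>
    rw [exteriorPower, pow_succ] at hx
    induction hx using Submodule.mul_induction_on' with
    | mem_mul_mem y hy _ hn =>
      obtain ⟨n, rfl⟩ := hn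
      rw [contractRight_mul_ι]
      exact sub_mem (Submodule.smul_mem _ _ hy) (mul_ι_mem_exteriorPower (ih hy) n)
    | add y _ z _ hy hz => rw [map_add, LinearMap.add_apply]; exact add_mem hy hz

theorem sum_contractRight_coord_mul_ι {I : Type*} [Fintype I] (b : Module.Basis I R M) {k : ℕ}
    {x : ExteriorAlgebra R M} (hx : x ∈ ⋀[R]^k M) :
    ∑ i, contractRight x (b.coord i) * ι R (b i) = k • x := by
  induction hx using Submodule.pow_induction_on_right' with
  | algebraMap c => simp [contractRight_algebraMap]
  | add x y i _ _ hx hy =>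
    simp only [map_add, LinearMap.add_apply, add_mul, Finset.sum_add_distrib, hx, hy, smul_add]
  | mul_mem i x _ ih v hv =>
    obtain ⟨n, rfl⟩ := hv
    have hswap : ∀ j, contractRight x (b.coord j) * ι R n * ι R (b j) =
        -(contractRight x (b.coord j) * ι R (b j) * ι R n) := fun j => by
      rw [mul_assoc, mul_assoc, ← mul_neg, eq_neg_of_add_eq_zero_left (ι_add_mul_swap n (b j))]
    calc ∑ j, contractRight (x * ι R n) (b.coord j) * ι R (b j)
        = x * ι R (∑ j, b.coord j n • b j) +
            (∑ j, contractRight x (b.coord j) * ι R (b j)) * ι R n := by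
          simp only [contractRight_mul_ι, sub_mul, hswap, sub_neg_eq_add, Finset.sum_add_distrib,
            map_sum, map_smul, Finset.mul_sum, Finset.sum_mul, smul_mul_assoc, mul_smul_comm]
      _ = (i + 1) • (x * ι R n) := by
          simp only [Module.Basis.coord_apply, b.sum_repr, ih, smul_mul_assoc, succ_nsmul]
          abel

theorem sum_contractRight_mul_ι_coord_add_nsmul {I : Type*} [Fintype I] (b : Module.Basis I R M)
    {k : ℕ} {x : ExteriorAlgebra R M} (hx : x ∈ ⋀[R]^k M) :
    ∑ i, contractRight (x * ι R (b i)) (b.coord i) + k • x = Fintype.card I • x := by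
  simp only [contractRight_mul_ι, Finset.sum_sub_distrib, sum_contractRight_coord_mul_ι b hx,
    Module.Basis.coord_apply, Module.Basis.repr_self, Finsupp.single_eq_same, one_smul,
    Finset.sum_const, Finset.card_univ, sub_add_cancel]

theorem subsingleton_exteriorPower_of_card_lt {I : Type*} [Fintype I]
    (b : Module.Basis I R M) {n : ℕ} (hn : Fintype.card I < n) : Subsingleton (⋀[R]^n M) := by
  let : LinearOrder I := LinearOrder.lift' _ (Fintype.equivFin I).injective
  have : IsEmpty (Set.powersetCard I n) :=
    ⟨fun s => hn.not_ge (s.2 ▸ Finset.card_le_univ s.1)⟩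
  exact not_nontrivial_iff_subsingleton.mp fun _ =>
    (b.exteriorPower n).index_nonempty.elim isEmptyElim

theorem contractRight_mul_ι_of_card_le {I : Type*} [Fintype I]
    (b : Module.Basis I R M) {k : ℕ} (hk : Fintype.card I ≤ k) {x : ExteriorAlgebra R M}
    (hx : x ∈ ⋀[R]^k M) (φ : Module.Dual R M) (m : M) :
    contractRight x φ * ι R m = φ m • x := by
  have := subsingleton_exteriorPower_of_card_lt b (n := k + 1) (by omega)
  have hzero : x * ι R m = 0 :=
    congrArg Subtype.val
      (Subsingleton.elim (⟨_, mul_ι_mem_exteriorPower hx m⟩ : ⋀[R]^(k + 1) M) 0)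
  have h := contractRight_mul_ι (d := φ) m x
  rw [hzero, map_zero, LinearMap.zero_apply, eq_comm, sub_eq_zero] at h
  exact h.symm

variable (R M) in
noncomputable def wedgeRight (k : ℕ) : ⋀[R]^k M →ₗ[R] M →ₗ[R] ⋀[R]^(k + 1) M :=
  LinearMap.mk₂ R (fun x m => ⟨x * ι R m, mul_ι_mem_exteriorPower x.2 m⟩)
    (fun _ _ _ => Subtype.ext (add_mul _ _ _))
    (fun _ _ _ => Subtype.ext (smul_mul_assoc _ _ _))
    (fun _ _ _ => Subtype.ext (by simp only [map_add, mul_add, Submodule.coe_add]))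
    (fun _ _ _ => Subtype.ext (by simp only [map_smul, mul_smul_comm, Submodule.coe_smul]))

@[simp]
theorem coe_wedgeRight_apply {k : ℕ} (x : ⋀[R]^k M) (m : M) :
    (wedgeRight R M k x m : ExteriorAlgebra R M) = x * ι R m := rfl

variable (R M) in
noncomputable def contractRightExteriorPower (k : ℕ) (φ : Module.Dual R M) :
    ⋀[R]^(k + 1) M →ₗ[R] ⋀[R]^k M :=
  (contractRight.flip φ).restrict fun _ hx => contractRight_mem_exteriorPower φ hx

@[simp]
theorem coe_contractRightExteriorPower_apply {k : ℕ} (φ : Module.Dual R M)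
    (x : ⋀[R]^(k + 1) M) :
    (contractRightExteriorPower R M k φ x : ExteriorAlgebra R M) =
      contractRight (x : ExteriorAlgebra R M) φ :=
  rfl

noncomputable def wedgeRightEquiv {I : Type*} [Fintype I]
    (b : Module.Basis I R M) {k : ℕ} (hk : Fintype.card I = k + 1) :
    ⋀[R]^k M ≃ₗ[R] (M →ₗ[R] ⋀[R]^(k + 1) M) :=
  .ofLinearMap (wedgeRight R M k)
    (∑ i, contractRightExteriorPower R M k (b.coord i) ∘ₗ LinearMap.applyₗ (b i))
    (LinearMap.ext fun f => LinearMap.ext fun m => Subtype.ext <| by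
      conv_rhs => rw [← b.sum_repr m, map_sum]
      simp [contractRight_mul_ι_of_card_le b hk.le (f _).2])
    (LinearMap.ext fun x => Subtype.ext <| by
      have := sum_contractRight_mul_ι_coord_add_nsmul b x.2
      rw [hk, succ_nsmul, add_comm, add_left_cancel_iff] at this
      simpa using this)

end ExteriorAlgebra

theorem contractAt_eq_dualTensorHom_comm (R : Type*) [CommRing R] (M : Type*) [AddCommGroup M]
    [Module R M] (r : ℕ) (m : M) (u : (⋀[R]^r M) ⊗[R] Module.Dual R M) :
    contractAt R M r m u = dualTensorHom R M (⋀[R]^r M) (TensorProduct.comm R _ _ u) m := by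
  induction u using TensorProduct.induction_on with
  | zero => simp
  | tmul t φ => simp [contractAt]
  | add u v hu hv => simp [hu, hv]

theorem Module.nonempty_basis_fin_of_finrank_eq {R : Type*} [CommRing R] {M : Type*}
    [AddCommGroup M] [Module R M] [Module.Free R M] [Module.Finite R M] {r : ℕ}
    (h : Module.finrank R M = r) : Nonempty (Module.Basis (Fin r) R M) := by
  rcases subsingleton_or_nontrivial R with hR | hR
  · have := Module.subsingleton R M
    exact ⟨.ofRepr (LinearEquiv.ofSubsingleton _ _)⟩
  · exact ⟨Module.finBasisOfFinrankEq R M h⟩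

/-- For a finite free module `M` of rank `r ≥ 1`, the wedge pairing
`⋀^{r-1} M ⊗ M → ⋀^r M` induces an isomorphism `⋀^{r-1} M ≅ ⋀^r M ⊗ M^*`:
there is a linear equivalence under which contracting `e x` against `m`
recovers the wedge product `x ∧ m`. -/
theorem exteriorPower_pred_iso_det_tensor_dual
    (R : Type*) [CommRing R] (M : Type*) [AddCommGroup M] [Module R M]
    [Module.Free R M] [Module.Finite R M] (r : ℕ) (hr : 1 ≤ r)
    (hrank : Module.finrank R M = r) :
    ∃ e : (⋀[R]^(r - 1) M) ≃ₗ[R] ((⋀[R]^r M) ⊗[R] Module.Dual R M),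
      ∀ (x : ⋀[R]^(r - 1) M) (m : M),
        contractAt R M r m (e x) =
          (x : ExteriorAlgebra R M) * ExteriorAlgebra.ι R m := by
  obtain ⟨n, rfl⟩ := Nat.exists_eq_add_of_le' hr
  obtain ⟨b⟩ := Module.nonempty_basis_fin_of_finrank_eq hrank
  let homEquiv := (TensorProduct.comm R _ _).trans (dualTensorHomEquiv R M (⋀[R]^(n + 1) M))
  refine ⟨(ExteriorAlgebra.wedgeRightEquiv b (Fintype.card_fin _)).trans homEquiv.symm,
    fun x m => ?_⟩
  rw [contractAt_eq_dualTensorHom_comm]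
  simp [homEquiv, ExteriorAlgebra.wedgeRightEquiv]
end

section
/- Let (rE, dE), (rF, dF), (rE', dE') be integer pairs with positive first coordinates, slopes dE/rE ≤ dF/rF ≤ dE'/rE' with dE/rE < dE'/rE', and rF ≤ rE' < rE. Then ⟨E → F⟩ + ⟨F → E'⟩ ≤ ⟨E → E'⟩, where ⟨(r,d) → (r',d')⟩ := d'r − dr'; and equality holds if and only if dF/rF = dE'/rE' and rF = rE' (equivalently (rF, dF) = (rE', dE')). -/
/-!
Multiplied by `rF`, the defect `⟨E → E'⟩ − ⟨E → F⟩ − ⟨F → E'⟩` equals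
`⟨E → F⟩·(rE' − rF) + ⟨F → E'⟩·(rE − rF)`, and both brackets are nonnegative by the slope
inequalities. Since `rF < rE`, the defect vanishes iff `⟨F → E'⟩ = 0` and either `⟨E → F⟩ = 0` or
`rF = rE'`; the first alternative would make all three slopes equal, contradicting `dE/rE < dE'/rE'`.
-/

/-- The Euler-type bracket on charges: `⟨(r,d) → (r',d')⟩ = d'·r − d·r'`. -/
def chargeBracket (z w : ℤ × ℤ) : ℤ := w.2 * z.1 - z.2 * w.1

theorem chargeBracket_nonneg_iff {r r' : ℤ} (hr : 0 < r) (hr' : 0 < r') (d d' : ℤ) :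
    0 ≤ chargeBracket (r, d) (r', d') ↔ (d : ℚ) / r ≤ (d' : ℚ) / r' := by
  rw [chargeBracket, sub_nonneg, div_le_div_iff₀ (by exact_mod_cast hr) (by exact_mod_cast hr')]
  exact_mod_cast Iff.rfl

theorem chargeBracket_eq_zero_iff {r r' : ℤ} (hr : 0 < r) (hr' : 0 < r') (d d' : ℤ) :
    chargeBracket (r, d) (r', d') = 0 ↔ (d : ℚ) / r = (d' : ℚ) / r' := by
  rw [chargeBracket, sub_eq_zero, eq_comm, div_eq_div_iff (by positivity) (by positivity)]
  exact_mod_cast Iff.rfl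

theorem rank_mul_chargeBracket_defect (z w u : ℤ × ℤ) :
    w.1 * (chargeBracket z u - (chargeBracket z w + chargeBracket w u)) =
      chargeBracket z w * (u.1 - w.1) + chargeBracket w u * (z.1 - w.1) := by
  simp only [chargeBracket]
  ring

section Intermediate

variable {z w u : ℤ × ℤ} (hw : 0 < w.1) (hzw : 0 ≤ chargeBracket z w)
  (hwu : 0 ≤ chargeBracket w u) (hwu_rank : w.1 ≤ u.1)
include hw hzw hwu hwu_rank

theorem chargeBracket_add_chargeBracket_le (hwz_rank : w.1 ≤ z.1) :
    chargeBracket z w + chargeBracket w u ≤ chargeBracket z u := by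
  have hdefect := rank_mul_chargeBracket_defect z w u
  have hleft : 0 ≤ chargeBracket z w * (u.1 - w.1) := mul_nonneg hzw (sub_nonneg.2 hwu_rank)
  have hright : 0 ≤ chargeBracket w u * (z.1 - w.1) := mul_nonneg hwu (sub_nonneg.2 hwz_rank)
  have : 0 ≤ chargeBracket z u - (chargeBracket z w + chargeBracket w u) :=
    nonneg_of_mul_nonneg_right (by linarith) hw
  linarith

theorem chargeBracket_add_chargeBracket_eq_iff (hwz_rank : w.1 < z.1) :
    chargeBracket z w + chargeBracket w u = chargeBracket z u ↔
      chargeBracket w u = 0 ∧ (chargeBracket z w = 0 ∨ w.1 = u.1) := by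
  have hleft : 0 ≤ chargeBracket z w * (u.1 - w.1) := mul_nonneg hzw (sub_nonneg.2 hwu_rank)
  have hright : 0 ≤ chargeBracket w u * (z.1 - w.1) := mul_nonneg hwu (sub_nonneg.2 hwz_rank.le)
  rw [eq_comm, ← sub_eq_zero, ← mul_eq_zero_iff_left hw.ne', rank_mul_chargeBracket_defect,
    add_eq_zero_iff_of_nonneg hleft hright, mul_eq_zero, mul_eq_zero, sub_eq_zero, sub_eq_zero,
    eq_comm (a := u.1), or_iff_left hwz_rank.ne']
  exact and_comm

end Intermediate

theorem bracket_subadditive_through_intermediate_general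
    (rE dE rF dF rE' dE' : ℤ) (hrF : 0 < rF) (hrE' : 0 < rE')
    (h1 : (dE : ℚ) / rE ≤ (dF : ℚ) / rF) (h2 : (dF : ℚ) / rF ≤ (dE' : ℚ) / rE')
    (h3 : (dE : ℚ) / rE < (dE' : ℚ) / rE') (h4 : rF ≤ rE') (h5 : rE' < rE) :
    chargeBracket (rE, dE) (rF, dF) + chargeBracket (rF, dF) (rE', dE') ≤
      chargeBracket (rE, dE) (rE', dE') ∧
    (chargeBracket (rE, dE) (rF, dF) + chargeBracket (rF, dF) (rE', dE') =
        chargeBracket (rE, dE) (rE', dE') ↔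
      (dF : ℚ) / rF = (dE' : ℚ) / rE' ∧ rF = rE') := by
  have hrE : 0 < rE := hrE'.trans h5
  have hEF := (chargeBracket_nonneg_iff hrE hrF dE dF).2 h1
  have hFE' := (chargeBracket_nonneg_iff hrF hrE' dF dE').2 h2
  have hF_rank : rF < rE := h4.trans_lt h5
  refine ⟨chargeBracket_add_chargeBracket_le hrF hEF hFE' h4 hF_rank.le, ?_⟩
  rw [chargeBracket_add_chargeBracket_eq_iff hrF hEF hFE' h4 hF_rank,
    chargeBracket_eq_zero_iff hrF hrE', chargeBracket_eq_zero_iff hrE hrF]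
  refine and_congr_right fun hslope => or_iff_right fun hslope' => ?_
  exact h3.ne (hslope'.trans hslope)

theorem bracket_subadditive_through_intermediate
    (rE dE rF dF rE' dE' : ℤ) (hrE : 0 < rE) (hrF : 0 < rF) (hrE' : 0 < rE')
    (h1 : (dE : ℚ) / rE ≤ (dF : ℚ) / rF) (h2 : (dF : ℚ) / rF ≤ (dE' : ℚ) / rE')
    (h3 : (dE : ℚ) / rE < (dE' : ℚ) / rE') (h4 : rF ≤ rE') (h5 : rE' < rE) :
    chargeBracket (rE, dE) (rF, dF) + chargeBracket (rF, dF) (rE', dE') ≤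
      chargeBracket (rE, dE) (rE', dE') ∧
    (chargeBracket (rE, dE) (rF, dF) + chargeBracket (rF, dF) (rE', dE') =
        chargeBracket (rE, dE) (rE', dE') ↔
      (dF : ℚ) / rF = (dE' : ℚ) / rE' ∧ rF = rE') :=
  bracket_subadditive_through_intermediate_general rE dE rF dF rE' dE' hrF hrE' h1 h2 h3 h4 h5
end
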